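/- For every natural number n ≥ 1, the Legendre polynomial P_n defined by Rodrigues' formula has exactly n roots, all of which are real, simple, and lie in the open interval (−1, 1); that is, there exist n distinct reals v_1 < v_2 < ⋯ < v_n in (−1, 1) such that P_n(v_k) = 0 for each k, and P_n has degree n. -/

import Mathlib

open Polynomial

/-- The Legendre polynomial of degree `n`, defined by Rodrigues' formula
`P_n = (1/(2ⁿ n!)) (d/dX)ⁿ ((X² − 1)ⁿ)` in `ℝ[X]`. -/
noncomputable def legendre (n : ℕ) : Polynomial ℝ :=
  ((1 : ℝ) / (2 ^ n * n.factorial)) • (derivative^[n] ((X ^ 2 - 1) ^ n))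

/-!
`(X² − 1)ⁿ` vanishes to order `n` at `±1`, so its first `n − 1` derivatives still vanish at `±1`.
If the `k`-th derivative has `k` zeros inside `(−1, 1)`, these and `±1` are `k + 2` zeros, and
Rolle's theorem puts a zero of the `(k + 1)`-th derivative strictly between consecutive ones.
Hence the `n`-th derivative, of degree `n`, has `n` distinct zeros in `(−1, 1)`, which are then
necessarily all its roots, each simple.
-/

open Set

namespace Polynomial

theorem rootMultiplicity_eq_one_of_card_eq_natDegree {R : Type*} [CommRing R] [IsDomain R]
    {p : R[X]} {s : Finset R} (hs : s.card = p.natDegree)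
    (hroot : ∀ x ∈ s, p.IsRoot x) {x : R} (hx : x ∈ s) : p.rootMultiplicity x = 1 := by
  classical
  have hp : p ≠ 0 := by
    rintro rfl
    rw [natDegree_zero, Finset.card_eq_zero] at hs
    simp [hs] at hx
  have hle : s.val ≤ p.roots :=
    (Multiset.le_iff_subset s.nodup).2 fun y hy ↦ (mem_roots hp).2 (hroot y hy)
  have hroots : s.val = p.roots :=
    Multiset.eq_of_le_of_card_le hle (by rw [Finset.card_val, hs]; exact p.card_roots')
  rw [← count_roots, ← hroots]
  exact Multiset.count_eq_one_of_mem s.nodup hx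

theorem natDegree_iterate_derivative_eq {R : Type*} [Semiring R] [IsAddTorsionFree R]
    (p : R[X]) (k : ℕ) : (derivative^[k] p).natDegree = p.natDegree - k := by
  induction k with
  | zero => rfl
  | succ k ih => rw [Function.iterate_succ_apply', natDegree_derivative, ih, Nat.sub_sub]

theorem le_rootMultiplicity_pow_of_isRoot {R : Type*} [CommRing R] {p : R[X]} {a : R} {n : ℕ}
    (hpn : p ^ n ≠ 0) (h : p.IsRoot a) : n ≤ (p ^ n).rootMultiplicity a :=
  (le_rootMultiplicity_iff hpn).2 (pow_dvd_pow_of_dvd (dvd_iff_isRoot.2 h) n)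

theorem exists_mem_Ioo_isRoot_derivative (p : ℝ[X]) {a b : ℝ} (hab : a < b)
    (ha : p.IsRoot a) (hb : p.IsRoot b) : ∃ c ∈ Ioo a b, p.derivative.IsRoot c := by
  obtain ⟨c, hc, hc'⟩ := exists_deriv_eq_zero hab p.continuousOn (ha.trans hb.symm)
  exact ⟨c, hc, by rwa [Polynomial.deriv] at hc'⟩

theorem exists_strictMono_isRoot_derivative_interlacing (p : ℝ[X]) {m : ℕ}
    {u : Fin (m + 1) → ℝ} (hu : StrictMono u) (hroot : ∀ i, p.IsRoot (u i)) :
    ∃ w : Fin m → ℝ, StrictMono w ∧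
      ∀ i, w i ∈ Ioo (u i.castSucc) (u i.succ) ∧ p.derivative.IsRoot (w i) := by
  choose w hw using fun i : Fin m ↦
    exists_mem_Ioo_isRoot_derivative p (hu i.castSucc_lt_succ) (hroot _) (hroot _)
  refine ⟨w, fun i j hij ↦ ?_, hw⟩
  calc w i < u i.succ := (hw i).1.2
    _ ≤ u j.castSucc := hu.monotone (Fin.succ_le_castSucc_iff.2 hij)
    _ < w j := (hw j).1.1

theorem exists_strictMono_isRoot_derivative_Ioo (p : ℝ[X]) {a b : ℝ} (hab : a < b)
    (ha : p.IsRoot a) (hb : p.IsRoot b) {k : ℕ} {v : Fin k → ℝ} (hv : StrictMono v)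
    (hvab : ∀ i, v i ∈ Ioo a b) (hroot : ∀ i, p.IsRoot (v i)) :
    ∃ w : Fin (k + 1) → ℝ, StrictMono w ∧ ∀ i, w i ∈ Ioo a b ∧ p.derivative.IsRoot (w i) := by
  set u : Fin (k + 2) → ℝ := Fin.cons a (Fin.snoc v b)
  have hsnoc : StrictMono (Fin.snoc v b : Fin (k + 1) → ℝ) := by
    rw [← Fin.insertNth_last', Fin.strictMono_insertNth_iff]
    exact ⟨hv, fun i _ ↦ (hvab i).2, fun i hi ↦ absurd hi (Fin.castSucc_lt_last i).not_ge⟩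
  have hu : StrictMono u := by
    refine Fin.strictMono_cons.2 ⟨fun i ↦ ?_, hsnoc⟩
    induction i using Fin.lastCases with
    | last => simpa using hab
    | cast i => simpa using (hvab i).1
  have hu_root : ∀ i, p.IsRoot (u i) := by
    intro i
    induction i using Fin.cases with
    | zero => exact ha
    | succ i =>
      induction i using Fin.lastCases with
      | last => simpa [u] using hb
      | cast i => simpa [u] using hroot i
  obtain ⟨w, hw, hwu⟩ := exists_strictMono_isRoot_derivative_interlacing p hu hu_root
  refine ⟨w, hw, fun i ↦ ⟨⟨?_, ?_⟩, (hwu i).2⟩⟩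
  · calc a = u 0 := rfl
      _ ≤ u i.castSucc := hu.monotone (Fin.zero_le _)
      _ < w i := (hwu i).1.1
  · calc w i < u i.succ := (hwu i).1.2
      _ ≤ u (Fin.last _) := hu.monotone (Fin.le_last _)
      _ = b := by simp [u, ← Fin.succ_last]

theorem monic_X_sq_sub_one (R : Type*) [CommRing R] [Nontrivial R] :
    (X ^ 2 - 1 : R[X]).Monic := by
  simpa using monic_X_pow_sub_C (1 : R) two_ne_zero

theorem natDegree_X_sq_sub_one_pow (R : Type*) [CommRing R] [Nontrivial R] (n : ℕ) :
    ((X ^ 2 - 1 : R[X]) ^ n).natDegree = 2 * n := by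
  have h : (X ^ 2 - 1 : R[X]) = X ^ 2 - C 1 := by rw [C_1]
  rw [(monic_X_sq_sub_one R).natDegree_pow, h, natDegree_X_pow_sub_C, mul_comm]

theorem isRoot_iterate_derivative_X_sq_sub_one_pow {R : Type*} [CommRing R] [Nontrivial R]
    {a : R} (ha : a ^ 2 = 1) {n k : ℕ} (hk : k < n) :
    (derivative^[k] ((X ^ 2 - 1 : R[X]) ^ n)).IsRoot a :=
  isRoot_iterate_derivative_of_lt_rootMultiplicity <| hk.trans_le <|
    le_rootMultiplicity_pow_of_isRoot ((monic_X_sq_sub_one R).pow n).ne_zero (by simp [ha])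

theorem exists_strictMono_isRoot_iterate_derivative_X_sq_sub_one_pow {n k : ℕ} (hk : k ≤ n) :
    ∃ v : Fin k → ℝ, StrictMono v ∧
      ∀ i, v i ∈ Ioo (-1) 1 ∧ (derivative^[k] ((X ^ 2 - 1 : ℝ[X]) ^ n)).IsRoot (v i) := by
  induction k with
  | zero => exact ⟨Fin.elim0, fun i ↦ i.elim0, fun i ↦ i.elim0⟩
  | succ k ih =>
    obtain ⟨v, hv, hvI⟩ := ih (by omega)
    have hkn : k < n := by omega
    rw [Function.iterate_succ_apply']
    exact exists_strictMono_isRoot_derivative_Ioo _ (by norm_num)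
      (isRoot_iterate_derivative_X_sq_sub_one_pow (by norm_num) hkn)
      (isRoot_iterate_derivative_X_sq_sub_one_pow (by norm_num) hkn)
      hv (fun i ↦ (hvI i).1) (fun i ↦ (hvI i).2)

end Polynomial

theorem natDegree_legendre (n : ℕ) : (legendre n).natDegree = n := by
  rw [legendre, smul_eq_C_mul, natDegree_C_mul (by positivity), natDegree_iterate_derivative_eq,
    natDegree_X_sq_sub_one_pow]
  omega

theorem isRoot_legendre_iff {n : ℕ} {x : ℝ} :
    (legendre n).IsRoot x ↔ (derivative^[n] ((X ^ 2 - 1 : ℝ[X]) ^ n)).IsRoot x := by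
  simp [legendre, IsRoot, eval_smul, Nat.factorial_ne_zero]

theorem legendre_roots_real_simple_general
    (n : ℕ) :
    (legendre n).natDegree = n ∧
    ∃ v : Fin n → ℝ, StrictMono v ∧
      ∀ k : Fin n, v k ∈ Set.Ioo (-1 : ℝ) 1 ∧
        (legendre n).eval (v k) = 0 ∧
        (legendre n).rootMultiplicity (v k) = 1 := by
  obtain ⟨v, hv, hvI⟩ := exists_strictMono_isRoot_iterate_derivative_X_sq_sub_one_pow le_rfl
  have hroot : ∀ k, (legendre n).IsRoot (v k) := fun k ↦ isRoot_legendre_iff.2 (hvI k).2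
  have hcard : (Finset.univ.image v).card = (legendre n).natDegree := by
    rw [Finset.card_image_of_injective _ hv.injective, Finset.card_fin, natDegree_legendre]
  refine ⟨natDegree_legendre n, v, hv, fun k ↦ ⟨(hvI k).1, hroot k, ?_⟩⟩
  exact rootMultiplicity_eq_one_of_card_eq_natDegree hcard (by simpa using hroot)
    (Finset.mem_image_of_mem v (Finset.mem_univ k))

/-- For `n ≥ 1`, the Legendre polynomial `P_n` has degree `n` and exactly `n`
distinct real roots `v_1 < ⋯ < v_n`, all simple and lying in `(−1, 1)`. -/
theorem legendre_roots_real_simple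
    (n : ℕ) (hn : 1 ≤ n) :
    (legendre n).natDegree = n ∧
    ∃ v : Fin n → ℝ, StrictMono v ∧
      ∀ k : Fin n, v k ∈ Set.Ioo (-1 : ℝ) 1 ∧
        (legendre n).eval (v k) = 0 ∧
        (legendre n).rootMultiplicity (v k) = 1 :=
  legendre_roots_real_simple_general n
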